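/- Let μ be a locally determined positive measure on Σ, X a Banach space, and F : Ω → X weakly μ-measurable. Then F is Pettis integrable if and only if F is locally Pettis integrable and the vector measure ν_F : Σ^f → X is strongly additive (ν_F(B_n) → 0 for every disjoint sequence {B_n} ⊂ Σ^f). In particular, if X contains no subspace isomorphic to c₀ and ν_F is bounded, then local Pettis integrability of F implies Pettis integrability. -/

import Mathlib

open MeasureTheory ENNReal
open scoped ENNReal

noncomputable section

variable {Ω : Type*} [MeasurableSpace Ω]
variable {X : Type*} [NormedAddCommGroup X] [NormedSpace ℝ X] [CompleteSpace X]

/-- `F` is weakly `μ`-measurable. -/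
def WeaklyMeasurable (μ : Measure Ω) (F : Ω → X) : Prop :=
  ∀ x' : StrongDual ℝ X, AEStronglyMeasurable (fun t => x' (F t)) μ

/-- `F` is Dunford integrable. -/
def DunfordIntegrable (μ : Measure Ω) (F : Ω → X) : Prop :=
  WeaklyMeasurable μ F ∧ ∀ x' : StrongDual ℝ X, Integrable (fun t => x' (F t)) μ

/-- The Dunford norm `sup_{‖x*‖ ≤ 1} ∫ |⟨F, x*⟩| dμ` (in `ℝ≥0∞`). -/
def dunfordNorm (μ : Measure Ω) (F : Ω → X) : ℝ≥0∞ :=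
  ⨆ (x' : StrongDual ℝ X) (_ : ‖x'‖ ≤ 1), ∫⁻ t, ENNReal.ofReal |x' (F t)| ∂μ

/-- `x` is the Pettis integral of `F` over `A`. -/
def IsPettisIntegralOn (μ : Measure Ω) (F : Ω → X) (A : Set Ω) (x : X) : Prop :=
  ∀ x' : StrongDual ℝ X, x' x = ∫ t in A, x' (F t) ∂μ

/-- `F` is Pettis integrable. -/
def PettisIntegrable (μ : Measure Ω) (F : Ω → X) : Prop :=
  DunfordIntegrable μ F ∧ ∀ A : Set Ω, MeasurableSet A → ∃ x : X, IsPettisIntegralOn μ F A x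

-- The Pettis integral of `F` over `A` (junk value `0` if it does not exist).
open Classical in
def pettisIntegral (μ : Measure Ω) (F : Ω → X) (A : Set Ω) : X :=
  if h : ∃ x : X, IsPettisIntegralOn μ F A x then h.choose else 0

/-- The δ-ring `Σ^f` of measurable sets of finite measure. -/
def finiteMeasureSets (μ : Measure Ω) : Set (Set Ω) :=
  {B | MeasurableSet B ∧ μ B < ∞}

/-- `F` is locally Pettis integrable. -/
def LocPettisIntegrable (μ : Measure Ω) (F : Ω → X) : Prop :=
  WeaklyMeasurable μ F ∧ ∀ B ∈ finiteMeasureSets μ, PettisIntegrable μ (B.indicator F)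

/-- `F` is locally Bochner integrable. -/
def LocBochnerIntegrable (μ : Measure Ω) (F : Ω → X) : Prop :=
  AEStronglyMeasurable F μ ∧ ∀ B ∈ finiteMeasureSets μ, Integrable (B.indicator F) μ

/-- The variation of a scalar set function `lam` defined on a δ-ring `R`,
evaluated at `A`: the supremum of `Σ_j |lam A_j|` over finite disjoint families
of members of `R` contained in `A`. -/
def scalarVariation (R : Set (Set Ω)) (lam : Set Ω → ℝ) (A : Set Ω) : ℝ≥0∞ :=
  ⨆ (P : Finset (Set Ω)) (_ : ∀ B ∈ P, B ∈ R ∧ B ⊆ A)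
    (_ : (P : Set (Set Ω)).PairwiseDisjoint id), ∑ B ∈ P, ENNReal.ofReal |lam B|

/-- The variation of a vector set function `ν` defined on a δ-ring `R`. -/
def vectorVariation (R : Set (Set Ω)) (ν : Set Ω → X) (A : Set Ω) : ℝ≥0∞ :=
  ⨆ (P : Finset (Set Ω)) (_ : ∀ B ∈ P, B ∈ R ∧ B ⊆ A)
    (_ : (P : Set (Set Ω)).PairwiseDisjoint id), ∑ B ∈ P, ENNReal.ofReal ‖ν B‖

/-- The semivariation of a vector set function `ν` defined on a δ-ring `R`. -/
def semivariation (R : Set (Set Ω)) (ν : Set Ω → X) (A : Set Ω) : ℝ≥0∞ :=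
  ⨆ (x' : StrongDual ℝ X) (_ : ‖x'‖ ≤ 1),
    scalarVariation R (fun B => x' (ν B)) A

/-- `μ` is semi-finite. -/
def SemiFinite (μ : Measure Ω) : Prop :=
  ∀ A : Set Ω, MeasurableSet A → 0 < μ A →
    ∃ B ⊆ A, MeasurableSet B ∧ 0 < μ B ∧ μ B < ∞

/-- `μ` is locally determined: it is semi-finite and a set is measurable as soon as
its intersection with every finite-measure set is measurable. -/
def LocallyDetermined (μ : Measure Ω) : Prop :=
  SemiFinite μ ∧ ∀ A : Set Ω,
    (∀ B ∈ finiteMeasureSets μ, MeasurableSet (A ∩ B)) → MeasurableSet A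

/-!
Write `ν B` for the Pettis integral of `F` over `B ∈ Σ^f`.

If `ν` is strongly additive, then for every measurable `A` and `ε > 0` there is `C ⊆ A` in `Σ^f`
such that `‖ν B‖ ≤ ε` for all `B ⊆ A \ C` in `Σ^f`. Hence `ν` is bounded, which on a semi-finite
measure makes every `x* ∘ F` integrable, and `ν C` approximates `x* ↦ ∫_A x* ∘ F` in the dual
norm, so completeness of `X` gives the Pettis integral over `A`.

Conversely, if `‖ν Bₙ‖ ≥ ε` along disjoint `Bₙ` while the finite sums of `ν Bₙ` stay bounded,
Rosenthal's lemma extracts a subsequence and norm-one functionals `zₙ` with `zₙ (ν Bₙ) ≥ ε` and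
`∑_{m ≠ n} |zₙ (ν Bₘ)|` small. When `F` is Pettis integrable the subseries are weakly summable,
and Mazur's theorem then contradicts `zₙ (ν Bₙ) ≥ ε`; when only `ν` is bounded,
`a ↦ ∑ aₙ ν Bₙ` is an isomorphic embedding of `c₀` into `X`.
-/

open Filter Topology
open scoped ZeroAtInfty

section Rosenthal

theorem Set.Infinite.exists_pairwise_disjoint_infinite {α : Type*} {M : Set α}
    (hM : M.Infinite) :
    ∃ N : ℕ → Set α, (∀ j, N j ⊆ M) ∧ (∀ j, (N j).Infinite) ∧
      Pairwise (Function.onFun Disjoint N) := by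
  let e := hM.natEmbedding M
  have he : ∀ {p q : ℕ}, (e p : α) = e q → p = q := fun h => e.injective (Subtype.ext h)
  refine ⟨fun j => Set.range fun i => (e (Nat.pair j i) : α), ?_, fun j => ?_, ?_⟩
  · rintro j _ ⟨i, rfl⟩
    exact (e _).2
  · exact Set.infinite_range_of_injective fun i i' h => (Nat.pair_eq_pair.1 (he h)).2
  · intro j j' hjj'
    refine Set.disjoint_left.2 ?_
    rintro _ ⟨i, rfl⟩ ⟨i', h⟩
    exact hjj' (Nat.pair_eq_pair.1 (he h)).1.symm

variable {d : ℕ → ℕ → ℝ} {δ : ℝ}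

/-- One round of the proof of Rosenthal's lemma: the mass that the rows of `M` carry off `M`
grows by `δ` on an infinite `M' ⊆ M`. -/
lemma rosenthal_step
    (hbad : ∀ M : Set ℕ, M.Infinite →
      ∃ n ∈ M, ∃ s : Finset ℕ, ↑s ⊆ M \ {n} ∧ δ < ∑ m ∈ s, d n m)
    {M : Set ℕ} (hM : M.Infinite) {c : ℝ}
    (hc : ∀ n ∈ M, ∃ t : Finset ℕ, ↑t ∩ M ⊆ {n} ∧ c ≤ ∑ m ∈ t, d n m) :
    ∃ M' ⊆ M, M'.Infinite ∧
      ∀ n ∈ M', ∃ t : Finset ℕ, ↑t ∩ M' ⊆ {n} ∧ c + δ ≤ ∑ m ∈ t, d n m := by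
  classical
  obtain ⟨N, hNM, hNinf, hNdisj⟩ := hM.exists_pairwise_disjoint_infinite
  choose r hrN s hsN hδs using fun j => hbad (N j) (hNinf j)
  have hN_eq : ∀ {i j x}, x ∈ N i → x ∈ N j → i = j := fun {i j x} hi hj => by
    by_contra hij
    exact Set.disjoint_left.1 (hNdisj hij) hi hj
  refine ⟨Set.range r, Set.range_subset_iff.2 fun j => hNM j (hrN j),
    Set.infinite_range_of_injective fun i j h => hN_eq (hrN i) (h ▸ hrN j), ?_⟩
  rintro _ ⟨j, rfl⟩
  obtain ⟨t, htM, hct⟩ := hc (r j) (hNM j (hrN j))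
  have hts : Disjoint t (s j) := Finset.disjoint_left.2 fun x hxt hxs =>
    (hsN j hxs).2 (htM ⟨hxt, hNM j (hsN j hxs).1⟩)
  refine ⟨t ∪ s j, ?_, ?_⟩
  · rintro x ⟨hx, i, rfl⟩
    rcases Finset.mem_union.1 hx with hxt | hxs
    · exact htM ⟨hxt, hNM i (hrN i)⟩
    · have hij : i = j := hN_eq (hrN i) (hsN j hxs).1
      subst hij
      exact ((hsN i hxs).2 rfl).elim
  · rw [Finset.sum_union hts]
    linarith [hδs j]

theorem rosenthal {K : ℝ} (hK : ∀ n (s : Finset ℕ), ∑ m ∈ s, d n m ≤ K) (hδ : 0 < δ) :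
    ∃ M : Set ℕ, M.Infinite ∧ ∀ n ∈ M, ∀ s : Finset ℕ, ↑s ⊆ M \ {n} → ∑ m ∈ s, d n m ≤ δ := by
  by_contra! hbad
  have hmass : ∀ k : ℕ, ∃ M : Set ℕ, M.Infinite ∧
      ∀ n ∈ M, ∃ t : Finset ℕ, ↑t ∩ M ⊆ {n} ∧ k * δ ≤ ∑ m ∈ t, d n m := by
    intro k
    induction k with
    | zero => exact ⟨Set.univ, Set.infinite_univ, fun n _ => ⟨∅, by simp, by simp⟩⟩
    | succ k ih =>
      obtain ⟨M, hM, hc⟩ := ih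
      obtain ⟨M', -, hM', hc'⟩ := rosenthal_step hbad hM hc
      exact ⟨M', hM', by simpa [add_mul] using hc'⟩
  obtain ⟨k, hk⟩ := exists_nat_gt (K / δ)
  obtain ⟨M, hM, hc⟩ := hmass k
  obtain ⟨n, hn⟩ := hM.nonempty
  obtain ⟨t, -, ht⟩ := hc n hn
  have := (div_lt_iff₀ hδ).1 hk
  linarith [hK n t]

theorem rosenthal_injective {K : ℝ} (hK : ∀ n (s : Finset ℕ), ∑ m ∈ s, d n m ≤ K)
    (hδ : 0 < δ) :
    ∃ e : ℕ → ℕ, Function.Injective e ∧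
      ∀ i (s : Finset ℕ), i ∉ s → ∑ j ∈ s, d (e i) (e j) ≤ δ := by
  classical
  obtain ⟨M, hM, hMδ⟩ := rosenthal hK hδ
  let e : ℕ → ℕ := fun i => hM.natEmbedding M i
  have he : Function.Injective e := fun i j h => (hM.natEmbedding M).injective (Subtype.ext h)
  refine ⟨e, he, fun i s hi => ?_⟩
  rw [← Finset.sum_image he.injOn]
  refine hMδ (e i) (hM.natEmbedding M i).2 _ ?_
  rintro _ hm
  obtain ⟨j, hj, rfl⟩ := Finset.mem_image.1 hm
  exact ⟨(hM.natEmbedding M j).2, fun h => hi (he h ▸ hj)⟩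

end Rosenthal

section Sequences

variable {E : Type*} [NormedAddCommGroup E] [NormedSpace ℝ E]

lemma abs_dual_apply_le (x' : StrongDual ℝ E) (v : E) : |x' v| ≤ ‖x'‖ * ‖v‖ := by
  simpa only [Real.norm_eq_abs] using x'.le_opNorm v

lemma Finset.sum_abs_le_two_mul {ι : Type*} {a : ι → ℝ} {b : ℝ}
    (h : ∀ t : Finset ι, |∑ j ∈ t, a j| ≤ b) (s : Finset ι) : ∑ j ∈ s, |a j| ≤ 2 * b := by
  classical
  rw [← Finset.sum_filter_add_sum_filter_not s (fun j => 0 ≤ a j)]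
  have hpos : ∑ j ∈ s with 0 ≤ a j, |a j| = ∑ j ∈ s with 0 ≤ a j, a j :=
    Finset.sum_congr rfl fun j hj => abs_of_nonneg (Finset.mem_filter.1 hj).2
  have hneg : ∑ j ∈ s with ¬0 ≤ a j, |a j| = -∑ j ∈ s with ¬0 ≤ a j, a j := by
    rw [← Finset.sum_neg_distrib]
    exact Finset.sum_congr rfl fun j hj => abs_of_neg (not_le.1 (Finset.mem_filter.1 hj).2)
  rw [hpos, hneg]
  linarith [le_abs_self (∑ j ∈ s with 0 ≤ a j, a j), neg_le_abs (∑ j ∈ s with ¬0 ≤ a j, a j),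
    h (s.filter fun j => 0 ≤ a j), h (s.filter fun j => ¬0 ≤ a j)]

lemma sum_abs_dual_le_of_norm_sum_le {ι : Type*} {v : ι → E} {C : ℝ}
    (hv : ∀ s : Finset ι, ‖∑ j ∈ s, v j‖ ≤ C) (x' : StrongDual ℝ E) (s : Finset ι) :
    ∑ j ∈ s, |x' (v j)| ≤ 2 * (‖x'‖ * C) :=
  Finset.sum_abs_le_two_mul (fun t => by
    rw [← map_sum]
    exact (abs_dual_apply_le x' _).trans (mul_le_mul_of_nonneg_left (hv t) (norm_nonneg _))) s

lemma norm_sum_comp_le_of_injective {G : Type*} [SeminormedAddCommGroup G] {v : ℕ → G} {C : ℝ}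
    (hv : ∀ s : Finset ℕ, ‖∑ j ∈ s, v j‖ ≤ C)
    {e : ℕ → ℕ} (he : Function.Injective e) (s : Finset ℕ) : ‖∑ j ∈ s, v (e j)‖ ≤ C := by
  classical
  rw [← Finset.sum_image he.injOn]
  exact hv _

lemma abs_sub_le_of_hasSum {ι : Type*} [DecidableEq ι] {f : ι → ℝ} {a : ℝ} (hf : HasSum f a)
    (n : ι) {δ : ℝ} (h : ∀ s : Finset ι, n ∉ s → ∑ j ∈ s, |f j| ≤ δ) : |a - f n| ≤ δ := by
  have hg := hf.update n 0
  rw [zero_sub, neg_add_eq_sub] at hg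
  refine le_of_tendsto' ((continuous_abs.tendsto _).comp hg) fun s => ?_
  calc |∑ j ∈ s, Function.update f n 0 j| ≤ ∑ j ∈ s, |Function.update f n 0 j| :=
        Finset.abs_sum_le_sum_abs _ _
    _ ≤ ∑ j ∈ s.erase n, |f j| := by
        rw [← Finset.sum_erase s (by simp : |Function.update f n 0 n| = 0)]
        exact (Finset.sum_congr rfl fun j hj => by
          rw [Function.update_of_ne (Finset.ne_of_mem_erase hj)]).le
    _ ≤ δ := h _ (Finset.notMem_erase n s)

theorem exists_almost_biorthogonal_of_not_tendsto {v : ℕ → E} {C : ℝ}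
    (hv : ∀ s : Finset ℕ, ‖∑ j ∈ s, v j‖ ≤ C) (hnot : ¬Tendsto v atTop (𝓝 0)) :
    ∃ ε > 0, ∀ δ > 0, ∃ e : ℕ → ℕ, Function.Injective e ∧ ∃ z : ℕ → StrongDual ℝ E,
      (∀ i, ‖z i‖ ≤ 1) ∧ (∀ i, ε ≤ z i (v (e i))) ∧
      ∀ i (s : Finset ℕ), i ∉ s → ∑ j ∈ s, |z i (v (e j))| ≤ δ := by
  rw [NormedAddGroup.tendsto_nhds_zero] at hnot
  push Not at hnot
  obtain ⟨ε, hε, hfreq⟩ := hnot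
  obtain ⟨e₀, he₀, hε₀⟩ := extraction_of_frequently_atTop hfreq
  refine ⟨ε, hε, fun δ hδ => ?_⟩
  choose y hy1 hy using fun k => exists_dual_vector'' ℝ (v (e₀ k))
  have hC : 0 ≤ C := (norm_nonneg _).trans (hv ∅)
  have hrow : ∀ k (s : Finset ℕ), ∑ j ∈ s, |y k (v (e₀ j))| ≤ 2 * C := fun k s =>
    (sum_abs_dual_le_of_norm_sum_le (norm_sum_comp_le_of_injective hv he₀.injective) (y k) s).trans
      (by nlinarith [hy1 k, norm_nonneg (y k)])
  obtain ⟨e, he, hδe⟩ := rosenthal_injective hrow hδ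
  refine ⟨e₀ ∘ e, he₀.injective.comp he, fun i => y (e i), fun i => hy1 _, fun i => ?_, hδe⟩
  simpa [hy] using hε₀ (e i)

lemma mem_closure_convexHull_of_tendsto_dual {S : ℕ → E} {x : E}
    (h : ∀ x' : StrongDual ℝ E, Tendsto (fun k => x' (S k)) atTop (𝓝 (x' x))) :
    x ∈ closure (convexHull ℝ (Set.range S)) := by
  by_contra hx
  obtain ⟨f, u, hfu, hux⟩ := geometric_hahn_banach_closed_point
    (convex_convexHull ℝ _).closure isClosed_closure hx
  have hle : f x ≤ u := le_of_tendsto' (h f) fun k =>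
    (hfu _ (subset_closure (subset_convexHull ℝ _ (Set.mem_range_self k)))).le
  linarith

/-- `x` is a norm limit of convex combinations of partial sums, on which `z n` is small for
large `n`, whereas `z n x` is close to `z n (v n) ≥ ε`. -/
lemma le_three_mul_of_hasSum_dual {v : ℕ → E} {z : ℕ → StrongDual ℝ E} {ε δ : ℝ} {x : E}
    (hδ : 0 < δ) (hz : ∀ i, ‖z i‖ ≤ 1) (hdiag : ∀ i, ε ≤ z i (v i))
    (hoff : ∀ i (s : Finset ℕ), i ∉ s → ∑ j ∈ s, |z i (v j)| ≤ δ)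
    (hsum : ∀ x' : StrongDual ℝ E, HasSum (fun i => x' (v i)) (x' x)) : ε ≤ 3 * δ := by
  let S : ℕ → E := fun k => ∑ i ∈ Finset.range k, v i
  have hx : x ∈ closure (convexHull ℝ (Set.range S)) :=
    mem_closure_convexHull_of_tendsto_dual fun x' => by
      simpa [S, map_sum] using (hsum x').tendsto_sum_nat
  obtain ⟨y, hy, hxy⟩ := Metric.mem_closure_iff.1 hx δ hδ
  let P : Set E := {y | ∃ N, ∀ m ≥ N, |z m y| ≤ δ}
  have hP : Convex ℝ P := by
    rintro y₁ ⟨N₁, hN₁⟩ y₂ ⟨N₂, hN₂⟩ a b ha hb hab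
    refine ⟨max N₁ N₂, fun m hm => ?_⟩
    rw [map_add, map_smul, map_smul, smul_eq_mul, smul_eq_mul]
    calc |a * z m y₁ + b * z m y₂| ≤ a * |z m y₁| + b * |z m y₂| := by
          simpa [abs_mul, abs_of_nonneg ha, abs_of_nonneg hb] using
            abs_add_le (a * z m y₁) (b * z m y₂)
      _ ≤ a * δ + b * δ := by
          gcongr
          exacts [hN₁ m (le_of_max_le_left hm), hN₂ m (le_of_max_le_right hm)]
      _ = δ := by rw [← add_mul, hab, one_mul]
  have hSP : Set.range S ⊆ P := by
    rintro _ ⟨k, rfl⟩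
    refine ⟨k, fun m hm => ?_⟩
    simp only [S, map_sum]
    exact (Finset.abs_sum_le_sum_abs _ _).trans
      (hoff m _ fun hmk => (Finset.mem_range.1 hmk).not_ge hm)
  obtain ⟨N, hN⟩ := convexHull_min hSP hP hy
  have hxv : |z N x - z N (v N)| ≤ δ := abs_sub_le_of_hasSum (hsum (z N)) N (hoff N)
  have hxy' : |z N x - z N y| ≤ δ := by
    rw [← map_sub]
    refine (abs_dual_apply_le _ _).trans ?_
    have := dist_eq_norm x y ▸ hxy.le
    nlinarith [hz N, norm_nonneg (z N), norm_nonneg (x - y)]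
  linarith [abs_le.1 hxv, abs_le.1 hxy', abs_le.1 (hN N le_rfl), hdiag N]

theorem tendsto_zero_of_forall_hasSum_dual {v : ℕ → E} {C : ℝ}
    (hv : ∀ s : Finset ℕ, ‖∑ j ∈ s, v j‖ ≤ C)
    (hsub : ∀ e : ℕ → ℕ, Function.Injective e →
      ∃ x : E, ∀ x' : StrongDual ℝ E, HasSum (fun i => x' (v (e i))) (x' x)) :
    Tendsto v atTop (𝓝 0) := by
  by_contra hnot
  obtain ⟨ε, hε, hbi⟩ := exists_almost_biorthogonal_of_not_tendsto hv hnot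
  obtain ⟨e, he, z, hz, hdiag, hoff⟩ := hbi (ε / 4) (by positivity)
  obtain ⟨x, hx⟩ := hsub e he
  linarith [le_three_mul_of_hasSum_dual (by positivity) hz hdiag hoff hx]

end Sequences

section C0

lemma ZeroAtInftyContinuousMap.abs_apply_le_norm (a : C₀(ℕ, ℝ)) (j : ℕ) : |a j| ≤ ‖a‖ := by
  simpa [Real.norm_eq_abs] using BoundedContinuousFunction.norm_coe_le_norm a.toBCF j

lemma ZeroAtInftyContinuousMap.tendsto_atTop (a : C₀(ℕ, ℝ)) : Tendsto a atTop (𝓝 0) :=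
  cocompact_eq_atTop (α := ℕ) ▸ zero_at_infty a

variable {E : Type*} [NormedAddCommGroup E] [NormedSpace ℝ E]

lemma norm_sum_smul_le_of_norm_sum_le {ι : Type*} {v : ι → E} {C : ℝ}
    (hv : ∀ s : Finset ι, ‖∑ j ∈ s, v j‖ ≤ C) {a : ι → ℝ} {r : ℝ} (hr : 0 ≤ r) {s : Finset ι}
    (ha : ∀ j ∈ s, |a j| ≤ r) : ‖∑ j ∈ s, a j • v j‖ ≤ 2 * (r * C) := by
  have hC : 0 ≤ C := (norm_nonneg _).trans (hv ∅)
  refine NormedSpace.norm_le_dual_bound ℝ _ (by positivity) fun x' => ?_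
  rw [map_sum, Real.norm_eq_abs]
  calc |∑ j ∈ s, x' (a j • v j)| ≤ ∑ j ∈ s, |a j| * |x' (v j)| := by
        simpa [abs_mul] using Finset.abs_sum_le_sum_abs (fun j => x' (a j • v j)) s
    _ ≤ ∑ j ∈ s, r * |x' (v j)| :=
        Finset.sum_le_sum fun j hj => mul_le_mul_of_nonneg_right (ha j hj) (abs_nonneg _)
    _ = r * ∑ j ∈ s, |x' (v j)| := (Finset.mul_sum _ _ _).symm
    _ ≤ r * (2 * (‖x'‖ * C)) :=
        mul_le_mul_of_nonneg_left (sum_abs_dual_le_of_norm_sum_le hv x' s) hr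
    _ = 2 * (r * C) * ‖x'‖ := by ring

lemma le_norm_of_hasSum_smul {v : ℕ → E} {z : ℕ → StrongDual ℝ E} {ε δ : ℝ} (hε : 0 < ε)
    (hz : ∀ i, ‖z i‖ ≤ 1) (hdiag : ∀ i, ε ≤ z i (v i))
    (hoff : ∀ i (s : Finset ℕ), i ∉ s → ∑ j ∈ s, |z i (v j)| ≤ δ)
    {a : C₀(ℕ, ℝ)} {y : E} (hy : HasSum (fun j => a j • v j) y) : (ε - δ) * ‖a‖ ≤ ‖y‖ := by
  have hk : ∀ k, |a k| * ε ≤ ‖y‖ + ‖a‖ * δ := by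
    intro k
    have hsum : HasSum (fun j => a j * z k (v j)) (z k y) := by simpa using hy.mapL (z k)
    have hrest : |z k y - a k * z k (v k)| ≤ ‖a‖ * δ := by
      refine abs_sub_le_of_hasSum hsum k fun s hks => ?_
      calc ∑ j ∈ s, |a j * z k (v j)| ≤ ∑ j ∈ s, ‖a‖ * |z k (v j)| :=
            Finset.sum_le_sum fun j _ => by
              rw [abs_mul]
              exact mul_le_mul_of_nonneg_right (a.abs_apply_le_norm j) (abs_nonneg _)
        _ = ‖a‖ * ∑ j ∈ s, |z k (v j)| := (Finset.mul_sum _ _ _).symm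
        _ ≤ ‖a‖ * δ := mul_le_mul_of_nonneg_left (hoff k s hks) (norm_nonneg a)
    have hzy : |z k y| ≤ ‖y‖ :=
      (abs_dual_apply_le _ _).trans (by nlinarith [hz k, norm_nonneg y])
    have hdk : |a k| * ε ≤ |a k * z k (v k)| := by
      rw [abs_mul, abs_of_pos (hε.trans_le (hdiag k))]
      exact mul_le_mul_of_nonneg_left (hdiag k) (abs_nonneg _)
    linarith [abs_sub_abs_le_abs_sub (a k * z k (v k)) (z k y), abs_sub_comm (z k y)
      (a k * z k (v k))]
  have ha : ‖a‖ ≤ (‖y‖ + ‖a‖ * δ) / ε := by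
    calc ‖a‖ = ⨆ k, ‖a.toBCF k‖ := by
          rw [← ZeroAtInftyContinuousMap.norm_toBCF_eq_norm,
            BoundedContinuousFunction.norm_eq_iSup_norm]
      _ ≤ _ := ciSup_le fun k => (le_div_iff₀ hε).2 (by simpa [Real.norm_eq_abs] using hk k)
  rw [le_div_iff₀ hε] at ha
  linarith

variable [CompleteSpace E]

lemma summable_smul_of_norm_sum_le {v : ℕ → E} {C : ℝ} (hv : ∀ s : Finset ℕ, ‖∑ j ∈ s, v j‖ ≤ C)
    {a : ℕ → ℝ} (ha : Tendsto a atTop (𝓝 0)) : Summable fun j => a j • v j := by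
  have hC : 0 ≤ C := (norm_nonneg _).trans (hv ∅)
  refine summable_iff_vanishing_norm.2 fun ε hε => ?_
  obtain ⟨N, hN⟩ := eventually_atTop.1
    (NormedAddGroup.tendsto_nhds_zero.1 ha (ε / (2 * C + 1)) (by positivity))
  refine ⟨Finset.range N, fun t ht => ?_⟩
  have hsmall : ∀ j ∈ t, |a j| ≤ ε / (2 * C + 1) := fun j hj =>
    (hN j (not_lt.1 fun hjN => Finset.disjoint_left.1 ht hj (Finset.mem_range.2 hjN))).le
  calc ‖∑ j ∈ t, a j • v j‖ ≤ 2 * (ε / (2 * C + 1) * C) :=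
        norm_sum_smul_le_of_norm_sum_le hv (by positivity) hsmall
    _ < ε := by
        rw [div_mul_eq_mul_div, mul_div_assoc', div_lt_iff₀ (by positivity)]
        nlinarith

theorem exists_clm_c0_hasSum {v : ℕ → E} {C : ℝ} (hv : ∀ s : Finset ℕ, ‖∑ j ∈ s, v j‖ ≤ C) :
    ∃ T : C₀(ℕ, ℝ) →L[ℝ] E, ∀ a, HasSum (fun j => a j • v j) (T a) := by
  have hs : ∀ a : C₀(ℕ, ℝ), Summable fun j => a j • v j := fun a =>
    summable_smul_of_norm_sum_le hv a.tendsto_atTop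
  let L : C₀(ℕ, ℝ) →ₗ[ℝ] E :=
    { toFun := fun a => ∑' j, a j • v j
      map_add' := fun a b => by simpa [add_smul] using (hs a).tsum_add (hs b)
      map_smul' := fun c a => by simpa [smul_smul] using (hs a).tsum_const_smul c }
  refine ⟨L.mkContinuous (2 * C) fun a => ?_, fun a => (hs a).hasSum⟩
  refine le_of_tendsto' ((continuous_norm.tendsto _).comp (hs a).hasSum) fun s => ?_
  exact (norm_sum_smul_le_of_norm_sum_le hv (norm_nonneg a) fun j _ =>
    a.abs_apply_le_norm j).trans_eq (by ring)

theorem exists_c0_embedding_of_not_tendsto {v : ℕ → E} {C : ℝ}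
    (hv : ∀ s : Finset ℕ, ‖∑ j ∈ s, v j‖ ≤ C) (hnot : ¬Tendsto v atTop (𝓝 0)) :
    ∃ T : C₀(ℕ, ℝ) →L[ℝ] E, ∃ c : ℝ, 0 < c ∧ ∀ y, c * ‖y‖ ≤ ‖T y‖ := by
  obtain ⟨ε, hε, hbi⟩ := exists_almost_biorthogonal_of_not_tendsto hv hnot
  obtain ⟨e, he, z, hz, hdiag, hoff⟩ := hbi (ε / 2) (by positivity)
  obtain ⟨T, hT⟩ := exists_clm_c0_hasSum (norm_sum_comp_le_of_injective hv he)
  refine ⟨T, ε / 2, by positivity, fun a => ?_⟩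
  linarith [le_norm_of_hasSum_smul hε hz hdiag hoff (hT a)]

end C0

section MeasureTheory

variable {μ : Measure Ω}

lemma empty_mem_finiteMeasureSets : (∅ : Set Ω) ∈ finiteMeasureSets μ :=
  ⟨MeasurableSet.empty, by simp⟩

lemma mem_finiteMeasureSets_of_subset {A B : Set Ω} (hA : MeasurableSet A)
    (hB : B ∈ finiteMeasureSets μ) (hAB : A ⊆ B) : A ∈ finiteMeasureSets μ :=
  ⟨hA, (measure_mono hAB).trans_lt hB.2⟩

lemma union_mem_finiteMeasureSets {A B : Set Ω} (hA : A ∈ finiteMeasureSets μ)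
    (hB : B ∈ finiteMeasureSets μ) : A ∪ B ∈ finiteMeasureSets μ :=
  ⟨hA.1.union hB.1, (measure_union_le A B).trans_lt (ENNReal.add_lt_top.2 ⟨hA.2, hB.2⟩)⟩

lemma biUnion_mem_finiteMeasureSets {ι : Type*} {s : Set ι} (hs : s.Finite) {B : ι → Set Ω}
    (hB : ∀ i ∈ s, B i ∈ finiteMeasureSets μ) : ⋃ i ∈ s, B i ∈ finiteMeasureSets μ :=
  ⟨hs.measurableSet_biUnion fun i hi => (hB i hi).1,
    measure_biUnion_lt_top hs fun i hi => (hB i hi).2⟩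

lemma SemiFinite.measure_le (hμ : SemiFinite μ) {A : Set Ω} (hA : MeasurableSet A) {c : ℝ≥0∞}
    (h : ∀ B ∈ finiteMeasureSets μ, B ⊆ A → μ B ≤ c) : μ A ≤ c := by
  rcases eq_top_or_lt_top c with rfl | hc
  · exact le_top
  let S : Set ℝ≥0∞ := μ '' {B | B ∈ finiteMeasureSets μ ∧ B ⊆ A}
  have hSc : sSup S ≤ c := sSup_le (by rintro _ ⟨B, hB, rfl⟩; exact h B hB.1 hB.2)
  obtain ⟨u, -, hu, huS⟩ := exists_seq_tendsto_sSup (S := S)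
    ⟨0, ∅, ⟨empty_mem_finiteMeasureSets, Set.empty_subset A⟩, measure_empty⟩
    (OrderTop.bddAbove S)
  choose B hB hμB using huS
  have hU : ∀ n, Set.accumulate B n ∈ finiteMeasureSets μ ∧ Set.accumulate B n ⊆ A := fun n =>
    ⟨biUnion_mem_finiteMeasureSets (Set.finite_Iic n) fun i _ => (hB i).1,
      Set.iUnion₂_subset fun i _ => (hB i).2⟩
  have hV : MeasurableSet (⋃ n, B n) := MeasurableSet.iUnion fun n => (hB n).1.1
  -- the union of a maximizing sequence leaves only a null part of `A` uncovered
  have hAV : μ (A \ ⋃ n, B n) = 0 := by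
    by_contra hpos
    obtain ⟨D, hDA, hDm, hD0, hDfin⟩ := hμ _ (hA.diff hV) (pos_iff_ne_zero.2 hpos)
    have hle : ∀ n, u n + μ D ≤ sSup S := fun n => by
      have hdisj : Disjoint (Set.accumulate B n) D := Set.disjoint_left.2 fun x hx hxD =>
        (hDA hxD).2 (Set.accumulate_subset_iUnion n hx)
      calc u n + μ D ≤ μ (Set.accumulate B n) + μ D := by
            rw [← hμB n]
            gcongr
            exact Set.subset_accumulate
        _ = μ (Set.accumulate B n ∪ D) := (measure_union hdisj hDm).symm
        _ ≤ sSup S := le_sSup ⟨_, ⟨union_mem_finiteMeasureSets (hU n).1 ⟨hDm, hDfin⟩,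
            Set.union_subset (hU n).2 (hDA.trans Set.sdiff_subset)⟩, rfl⟩
    have hlim : sSup S + μ D ≤ sSup S := le_of_tendsto' (hu.add tendsto_const_nhds) hle
    have hD : μ D ≤ 0 :=
      ENNReal.le_of_add_le_add_left (hSc.trans_lt hc).ne (by rwa [add_zero])
    exact hD0.ne' (nonpos_iff_eq_zero.1 hD)
  calc μ A ≤ μ (A ∩ ⋃ n, B n) + μ (A \ ⋃ n, B n) := measure_le_inter_add_sdiff μ _ _
    _ ≤ μ (⋃ n, B n) := by rw [hAV, add_zero]; exact measure_mono Set.inter_subset_right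
    _ ≤ c := by
        rw [measure_iUnion_eq_iSup_accumulate]
        exact iSup_le fun n => h _ (hU n).1 (hU n).2

lemma SemiFinite.lintegral_le (hμ : SemiFinite μ) {f : Ω → ℝ≥0∞} (hf : AEMeasurable f μ)
    {c : ℝ≥0∞} (h : ∀ B ∈ finiteMeasureSets μ, ∫⁻ x in B, f x ∂μ ≤ c) : ∫⁻ x, f x ∂μ ≤ c := by
  rcases eq_top_or_lt_top c with rfl | hc
  · exact le_top
  have hg := hf.measurable_mk
  have hgB : ∀ B ∈ finiteMeasureSets μ, ∫⁻ x in B, hf.mk f x ∂μ ≤ c := fun B hB =>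
    (lintegral_congr_ae (ae_restrict_of_ae hf.ae_eq_mk.symm)).trans_le (h B hB)
  rw [lintegral_congr_ae hf.ae_eq_mk]
  let O : ℕ → Set Ω := fun n => {x | ((n : ℝ≥0∞) + 1)⁻¹ ≤ hf.mk f x}
  have hOm : ∀ n, MeasurableSet (O n) := fun n => measurableSet_le measurable_const hg
  -- Markov's inequality on the finite-measure subsets of each level set
  have hO : ∀ n, O n ∈ finiteMeasureSets μ := fun n => by
    refine ⟨hOm n, (hμ.measure_le (hOm n) (c := ((n : ℝ≥0∞) + 1) * c) fun B hB hBO => ?_).trans_lt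
      (ENNReal.mul_lt_top (by simp) hc)⟩
    rw [← ENNReal.inv_mul_le_iff (by simp) (by simp), ← setLIntegral_const]
    exact (setLIntegral_mono hg fun x hx => hBO hx).trans (hgB B hB)
  have hOmono : Monotone O := fun n m hnm x (hx : _ ≤ _) =>
    (ENNReal.inv_le_inv.2 (by gcongr)).trans hx
  have hsupp : Function.support (hf.mk f) ⊆ ⋃ n, O n := fun x hx => by
    obtain ⟨n, hn⟩ := ENNReal.exists_inv_nat_lt hx
    exact Set.mem_iUnion.2 ⟨n, (ENNReal.inv_le_inv.2 le_self_add).trans hn.le⟩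
  rw [← setLIntegral_eq_of_support_subset hsupp,
    setLIntegral_iUnion_of_directed _ hOmono.directed_le]
  exact iSup_le fun n => hgB _ (hO n)

lemma integral_abs_le_two_mul {g : Ω → ℝ} (hg : Integrable g μ) {b : ℝ}
    (hb : ∀ s, MeasurableSet s → |∫ x in s, g x ∂μ| ≤ b) : ∫ x, |g x| ∂μ ≤ 2 * b := by
  have hP : MeasurableSet {x | 0 ≤ hg.1.mk g x} :=
    measurableSet_le measurable_const hg.1.stronglyMeasurable_mk.measurable
  rw [← integral_add_compl hP hg.abs]
  have hpos : ∫ x in {x | 0 ≤ hg.1.mk g x}, |g x| ∂μ = ∫ x in {x | 0 ≤ hg.1.mk g x}, g x ∂μ :=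
    setIntegral_congr_ae hP (hg.1.ae_eq_mk.mono fun x hx hxP => by
      rw [hx]; exact abs_of_nonneg hxP)
  have hneg : ∫ x in {x | 0 ≤ hg.1.mk g x}ᶜ, |g x| ∂μ
      = -∫ x in {x | 0 ≤ hg.1.mk g x}ᶜ, g x ∂μ := by
    rw [← integral_neg]
    exact setIntegral_congr_ae hP.compl (hg.1.ae_eq_mk.mono fun x hx hxP => by
      rw [hx]; exact abs_of_neg (not_le.1 hxP))
  rw [hpos, hneg]
  linarith [abs_le.1 (hb _ hP), abs_le.1 (hb _ hP.compl)]

/-- An integrable function lives on a σ-finite set, exhausted by sets of finite measure. -/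
lemma abs_integral_le_of_forall_finiteMeasureSets {g : Ω → ℝ} (hg : Integrable g μ) {b : ℝ}
    (hb : ∀ B ∈ finiteMeasureSets μ, |∫ x in B, g x ∂μ| ≤ b) : |∫ x, g x ∂μ| ≤ b := by
  obtain ⟨t, ht, hgt, hσ⟩ := hg.aefinStronglyMeasurable.exists_set_sigmaFinite
  let S : ℕ → Set Ω := fun n => t ∩ spanningSets (μ.restrict t) n
  have hS : ∀ n, S n ∈ finiteMeasureSets μ := fun n => by
    refine ⟨ht.inter (measurableSet_spanningSets _ n), ?_⟩
    show μ (t ∩ _) < ∞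
    rw [Set.inter_comm, ← Measure.restrict_apply (measurableSet_spanningSets _ n)]
    exact measure_spanningSets_lt_top _ n
  have hSt : ⋃ n, S n = t := by simp [S, ← Set.inter_iUnion, iUnion_spanningSets]
  have hlim := tendsto_setIntegral_of_monotone (fun n => (hS n).1)
    (fun m n hmn => Set.inter_subset_inter_right _ (monotone_spanningSets _ hmn)) hg.integrableOn
  rw [hSt, setIntegral_eq_integral_of_ae_compl_eq_zero ((ae_restrict_iff' ht.compl).1 hgt)]
    at hlim
  exact le_of_tendsto' ((continuous_abs.tendsto _).comp hlim) fun n => hb _ (hS n)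

lemma abs_setIntegral_le_of_forall_subset {g : Ω → ℝ} {s : Set Ω} (hs : MeasurableSet s)
    (hg : IntegrableOn g s μ) {b : ℝ}
    (hb : ∀ B ∈ finiteMeasureSets μ, B ⊆ s → |∫ x in B, g x ∂μ| ≤ b) :
    |∫ x in s, g x ∂μ| ≤ b :=
  abs_integral_le_of_forall_finiteMeasureSets hg fun B hB => by
    rw [Measure.restrict_restrict hB.1]
    exact hb _ ⟨hB.1.inter hs, by rw [← Measure.restrict_apply hB.1]; exact hB.2⟩
      Set.inter_subset_right

lemma SemiFinite.integrable_of_forall_abs_setIntegral_le (hμ : SemiFinite μ) {g : Ω → ℝ}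
    (hg : AEStronglyMeasurable g μ) (hint : ∀ B ∈ finiteMeasureSets μ, IntegrableOn g B μ)
    {b : ℝ} (hb : ∀ B ∈ finiteMeasureSets μ, |∫ x in B, g x ∂μ| ≤ b) : Integrable g μ := by
  refine ⟨hg, (hμ.lintegral_le hg.enorm (c := ENNReal.ofReal (2 * b)) fun B hB => ?_).trans_lt
    ENNReal.ofReal_lt_top⟩
  rw [← ofReal_integral_norm_eq_lintegral_enorm (hint B hB)]
  refine ENNReal.ofReal_le_ofReal ?_
  simp only [Real.norm_eq_abs]
  refine integral_abs_le_two_mul (hint B hB) fun s hs => ?_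
  rw [Measure.restrict_restrict hs]
  exact hb _ (mem_finiteMeasureSets_of_subset (hs.inter hB.1) hB Set.inter_subset_right)

end MeasureTheory

section StronglyAdditive

variable {E : Type*} [NormedAddCommGroup E]

def IsStronglyAdditive {α : Type*} (R : Set (Set α)) (ν : Set α → E) : Prop :=
  ∀ B : ℕ → Set α, (∀ n, B n ∈ R) → Pairwise (Function.onFun Disjoint B) →
    Tendsto (fun n => ν (B n)) atTop (𝓝 0)

lemma exists_pairwise_disjoint_of_forall_exists_disjoint {α : Type*} {R : Set (Set α)}
    (hempty : ∅ ∈ R) (hunion : ∀ A ∈ R, ∀ B ∈ R, A ∪ B ∈ R) {P : Set α → Prop}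
    (h : ∀ C ∈ R, ∃ B ∈ R, Disjoint B C ∧ P B) :
    ∃ B : ℕ → Set α, (∀ n, B n ∈ R ∧ P (B n)) ∧ Pairwise (Function.onFun Disjoint B) := by
  choose Φ hΦR hΦd hΦP using h
  let u : ℕ → R := fun n =>
    Nat.rec ⟨∅, hempty⟩ (fun _ C => ⟨C ∪ Φ C C.2, hunion _ C.2 _ (hΦR _ C.2)⟩) n
  have hu : Monotone fun n => (u n).1 := by
    refine monotone_nat_of_le_succ fun n => ?_
    show (u n).1 ⊆ (u n).1 ∪ Φ (u n).1 (u n).2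
    exact Set.subset_union_left
  refine ⟨fun n => Φ (u n).1 (u n).2, fun n => ⟨hΦR _ (u n).2, hΦP _ (u n).2⟩,
    (pairwise_disjoint_on _).2 fun m n hmn => ?_⟩
  exact (hΦd (u n).1 (u n).2).symm.mono_left (Set.subset_union_right.trans (hu hmn))

variable {μ : Measure Ω}

lemma IsStronglyAdditive.exists_forall_norm_le {ν : Set Ω → E}
    (hν : IsStronglyAdditive (finiteMeasureSets μ) ν) (A : Set Ω) {ε : ℝ} (hε : 0 < ε) :
    ∃ C ∈ finiteMeasureSets μ, C ⊆ A ∧ ∀ B ∈ finiteMeasureSets μ, B ⊆ A \ C → ‖ν B‖ ≤ ε := by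
  by_contra! h
  obtain ⟨B, hB, hd⟩ := exists_pairwise_disjoint_of_forall_exists_disjoint
    (R := {C | C ∈ finiteMeasureSets μ ∧ C ⊆ A}) (P := fun B => ε < ‖ν B‖)
    ⟨empty_mem_finiteMeasureSets, Set.empty_subset A⟩
    (fun C hC D hD => ⟨union_mem_finiteMeasureSets hC.1 hD.1, Set.union_subset hC.2 hD.2⟩)
    fun C hC => by
      obtain ⟨B, hB, hBA, hεB⟩ := h C hC.1 hC.2
      exact ⟨B, ⟨hB, hBA.trans Set.sdiff_subset⟩,
        Set.disjoint_left.2 fun x hx hxC => (hBA hx).2 hxC, hεB⟩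
  obtain ⟨n, hn⟩ :=
    (NormedAddGroup.tendsto_nhds_zero.1 (hν B (fun n => (hB n).1.1) hd) ε hε).exists
  exact (hB n).2.not_gt hn

end StronglyAdditive

section Pettis

variable {E : Type*} [NormedAddCommGroup E] [NormedSpace ℝ E]

lemma exists_norm_le_of_forall_abs_dual_le {ι : Type*} {v : ι → E}
    (h : ∀ x' : StrongDual ℝ E, ∃ r, ∀ i, |x' (v i)| ≤ r) : ∃ R, ∀ i, ‖v i‖ ≤ R := by
  obtain ⟨R, hR⟩ := banach_steinhaus (g := fun i => NormedSpace.inclusionInDoubleDual ℝ E (v i))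
    fun x' => by
      obtain ⟨r, hr⟩ := h x'
      exact ⟨r, fun i => by simpa using hr i⟩
  refine ⟨R, fun i => ?_⟩
  rw [← (NormedSpace.inclusionInDoubleDualLi ℝ (E := E)).norm_map (v i)]
  exact hR i

variable {μ : Measure Ω} {F : Ω → E}

lemma pettisIntegral_spec {A : Set Ω} (h : ∃ x, IsPettisIntegralOn μ F A x) :
    IsPettisIntegralOn μ F A (pettisIntegral μ F A) := by
  rw [pettisIntegral, dif_pos h]
  exact h.choose_spec

lemma dual_comp_indicator {α : Type*} {f : α → E} (x' : StrongDual ℝ E) (B : Set α) :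
    (fun t => x' (B.indicator f t)) = B.indicator fun t => x' (f t) :=
  (Set.indicator_comp_of_zero (map_zero x')).symm

namespace LocPettisIntegrable

lemma isPettisIntegralOn (hF : LocPettisIntegrable μ F) {B : Set Ω}
    (hB : B ∈ finiteMeasureSets μ) : IsPettisIntegralOn μ F B (pettisIntegral μ F B) := by
  refine pettisIntegral_spec ?_
  obtain ⟨x, hx⟩ := (hF.2 B hB).2 Set.univ MeasurableSet.univ
  refine ⟨x, fun x' => ?_⟩
  rw [hx x', Measure.restrict_univ, dual_comp_indicator, integral_indicator hB.1]

lemma integrableOn (hF : LocPettisIntegrable μ F) (x' : StrongDual ℝ E) {B : Set Ω}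
    (hB : B ∈ finiteMeasureSets μ) : IntegrableOn (fun t => x' (F t)) B μ := by
  have h := (hF.2 B hB).1.2 x'
  rwa [dual_comp_indicator, integrable_indicator_iff hB.1] at h

lemma pettisIntegral_union (hF : LocPettisIntegrable μ F) {A B : Set Ω}
    (hA : A ∈ finiteMeasureSets μ) (hB : B ∈ finiteMeasureSets μ) (hAB : Disjoint A B) :
    pettisIntegral μ F (A ∪ B) = pettisIntegral μ F A + pettisIntegral μ F B :=
  (SeparatingDual.eq_iff_forall_dual_eq (R := ℝ)).2 fun x' => by
    rw [map_add, hF.isPettisIntegralOn (union_mem_finiteMeasureSets hA hB) x',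
      hF.isPettisIntegralOn hA x', hF.isPettisIntegralOn hB x',
      setIntegral_union hAB hB.1 (hF.integrableOn x' hA) (hF.integrableOn x' hB)]

lemma pettisIntegral_biUnion_finset (hF : LocPettisIntegrable μ F) {B : ℕ → Set Ω}
    (hB : ∀ j, B j ∈ finiteMeasureSets μ) (hd : Pairwise (Function.onFun Disjoint B))
    (s : Finset ℕ) : pettisIntegral μ F (⋃ j ∈ s, B j) = ∑ j ∈ s, pettisIntegral μ F (B j) :=
  have hs : ⋃ j ∈ s, B j ∈ finiteMeasureSets μ :=
    biUnion_mem_finiteMeasureSets s.finite_toSet fun j _ => hB j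
  (SeparatingDual.eq_iff_forall_dual_eq (R := ℝ)).2 fun x' => by
    rw [map_sum, hF.isPettisIntegralOn hs x',
      integral_biUnion_finset s (fun j _ => (hB j).1) (fun i _ j _ hij => hd hij)
        fun j _ => hF.integrableOn x' (hB j)]
    exact Finset.sum_congr rfl fun j _ => (hF.isPettisIntegralOn (hB j) x').symm

lemma exists_norm_pettisIntegral_le (hF : LocPettisIntegrable μ F)
    (hν : IsStronglyAdditive (finiteMeasureSets μ) (pettisIntegral μ F)) :
    ∃ C, ∀ B ∈ finiteMeasureSets μ, ‖pettisIntegral μ F B‖ ≤ C := by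
  obtain ⟨C₁, hC₁, -, hsmall⟩ := hν.exists_forall_norm_le Set.univ one_pos
  obtain ⟨R, hR⟩ := exists_norm_le_of_forall_abs_dual_le
    (v := fun B : {B // B ∈ finiteMeasureSets μ ∧ B ⊆ C₁} => pettisIntegral μ F B) fun x' =>
      ⟨∫ t in C₁, |x' (F t)| ∂μ, fun B => by
        rw [hF.isPettisIntegralOn B.2.1 x']
        exact abs_integral_le_integral_abs.trans (setIntegral_mono_set
          (hF.integrableOn x' hC₁).abs (Eventually.of_forall fun t => abs_nonneg _)
          B.2.2.eventuallyLE)⟩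
  refine ⟨R + 1, fun B hB => ?_⟩
  have hin : B ∩ C₁ ∈ finiteMeasureSets μ :=
    mem_finiteMeasureSets_of_subset (hB.1.inter hC₁.1) hB Set.inter_subset_left
  have hout : B \ C₁ ∈ finiteMeasureSets μ :=
    mem_finiteMeasureSets_of_subset (hB.1.diff hC₁.1) hB Set.sdiff_subset
  calc ‖pettisIntegral μ F B‖
      = ‖pettisIntegral μ F (B ∩ C₁) + pettisIntegral μ F (B \ C₁)‖ := by
        rw [← hF.pettisIntegral_union hin hout Set.disjoint_sdiff_inter.symm,
          Set.inter_union_sdiff]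
    _ ≤ R + 1 := (norm_add_le _ _).trans (add_le_add (hR ⟨_, hin, Set.inter_subset_right⟩)
        (hsmall _ hout (Set.sdiff_subset_sdiff_left (Set.subset_univ B))))

lemma dunfordIntegrable (hF : LocPettisIntegrable μ F) (hμ : SemiFinite μ) {C : ℝ}
    (hC : ∀ B ∈ finiteMeasureSets μ, ‖pettisIntegral μ F B‖ ≤ C) : DunfordIntegrable μ F :=
  ⟨hF.1, fun x' => hμ.integrable_of_forall_abs_setIntegral_le (hF.1 x')
    (fun B hB => hF.integrableOn x' hB) (b := ‖x'‖ * C) fun B hB => by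
      rw [← hF.isPettisIntegralOn hB x']
      exact (abs_dual_apply_le x' _).trans (mul_le_mul_of_nonneg_left (hC B hB) (norm_nonneg x'))⟩

end LocPettisIntegrable

namespace PettisIntegrable

lemma isPettisIntegralOn (hF : PettisIntegrable μ F) {A : Set Ω} (hA : MeasurableSet A) :
    IsPettisIntegralOn μ F A (pettisIntegral μ F A) :=
  pettisIntegral_spec (hF.2 A hA)

lemma locPettisIntegrable (hF : PettisIntegrable μ F) : LocPettisIntegrable μ F := by
  refine ⟨hF.1.1, fun B hB => ⟨⟨fun x' => ?_, fun x' => ?_⟩, fun A hA => ?_⟩⟩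
  · rw [dual_comp_indicator]
    exact (hF.1.1 x').indicator hB.1
  · rw [dual_comp_indicator]
    exact (hF.1.2 x').indicator hB.1
  · refine ⟨pettisIntegral μ F (B ∩ A), fun x' => ?_⟩
    rw [hF.isPettisIntegralOn (hB.1.inter hA) x', dual_comp_indicator, integral_indicator hB.1,
      Measure.restrict_restrict hB.1]

lemma exists_norm_pettisIntegral_le (hF : PettisIntegrable μ F) :
    ∃ R, ∀ A, MeasurableSet A → ‖pettisIntegral μ F A‖ ≤ R := by
  obtain ⟨R, hR⟩ := exists_norm_le_of_forall_abs_dual_le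
    (v := fun A : {A : Set Ω // MeasurableSet A} => pettisIntegral μ F A) fun x' =>
      ⟨∫ t, |x' (F t)| ∂μ, fun A => by
        rw [hF.isPettisIntegralOn A.2 x']
        exact abs_integral_le_integral_abs.trans
          (setIntegral_le_integral (hF.1.2 x').abs (Eventually.of_forall fun t => abs_nonneg _))⟩
  exact ⟨R, fun A hA => hR ⟨A, hA⟩⟩

theorem isStronglyAdditive (hF : PettisIntegrable μ F) :
    IsStronglyAdditive (finiteMeasureSets μ) (pettisIntegral μ F) := by
  intro B hB hd
  obtain ⟨R, hR⟩ := hF.exists_norm_pettisIntegral_le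
  refine tendsto_zero_of_forall_hasSum_dual (C := R) (fun s => ?_) fun e he =>
    ⟨pettisIntegral μ F (⋃ i, B (e i)), fun x' => ?_⟩
  · rw [← hF.locPettisIntegrable.pettisIntegral_biUnion_finset hB hd s]
    exact hR _ (s.measurableSet_biUnion fun j _ => (hB j).1)
  · rw [hF.isPettisIntegralOn (MeasurableSet.iUnion fun i => (hB (e i)).1) x']
    have hterm : (fun i => x' (pettisIntegral μ F (B (e i))))
        = fun i => ∫ t in B (e i), x' (F t) ∂μ :=
      funext fun i => hF.isPettisIntegralOn (hB (e i)).1 x'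
    rw [hterm]
    exact hasSum_integral_iUnion (fun i => (hB (e i)).1) (hd.comp_of_injective he)
      (hF.1.2 x').integrableOn

end PettisIntegrable

variable [CompleteSpace E]

lemma exists_forall_dual_eq_of_approx {φ : StrongDual ℝ E → ℝ}
    (h : ∀ ε > 0, ∃ y : E, ∀ x', |x' y - φ x'| ≤ ε * ‖x'‖) : ∃ x : E, ∀ x', x' x = φ x' := by
  choose y hy using fun n : ℕ => h (1 / (n + 1)) Nat.one_div_pos_of_nat
  have hdist : ∀ n m, dist (y n) (y m) ≤ 1 / (n + 1) + 1 / (m + 1) := fun n m => by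
    rw [dist_eq_norm]
    refine NormedSpace.norm_le_dual_bound ℝ _ (by positivity) fun x' => ?_
    rw [map_sub, Real.norm_eq_abs]
    linarith [abs_sub_le (x' (y n)) (φ x') (x' (y m)), hy n x', hy m x',
      abs_sub_comm (φ x') (x' (y m))]
  have hcauchy : CauchySeq y := by
    refine cauchySeq_of_le_tendsto_0 (fun N : ℕ => 1 / ((N : ℝ) + 1) + 1 / ((N : ℝ) + 1))
      (fun n m N hn hm => (hdist n m).trans (add_le_add (Nat.one_div_le_one_div hn)
        (Nat.one_div_le_one_div hm))) ?_
    simpa using (tendsto_one_div_add_atTop_nhds_zero_nat (𝕜 := ℝ)).add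
      (tendsto_one_div_add_atTop_nhds_zero_nat (𝕜 := ℝ))
  obtain ⟨x, hx⟩ := cauchySeq_tendsto_of_complete hcauchy
  refine ⟨x, fun x' => tendsto_nhds_unique ((x'.continuous.tendsto x).comp hx) ?_⟩
  refine tendsto_iff_norm_sub_tendsto_zero.2 (squeeze_zero (fun n => norm_nonneg _)
    (fun n => (Real.norm_eq_abs _).trans_le (hy n x')) ?_)
  simpa using (tendsto_one_div_add_atTop_nhds_zero_nat (𝕜 := ℝ)).mul_const ‖x'‖

namespace LocPettisIntegrable

theorem pettisIntegrable (hF : LocPettisIntegrable μ F) (hμ : SemiFinite μ)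
    (hν : IsStronglyAdditive (finiteMeasureSets μ) (pettisIntegral μ F)) :
    PettisIntegrable μ F := by
  obtain ⟨C, hC⟩ := hF.exists_norm_pettisIntegral_le hν
  have hD := hF.dunfordIntegrable hμ hC
  refine ⟨hD, fun A hA => exists_forall_dual_eq_of_approx fun ε hε => ?_⟩
  obtain ⟨C₁, hC₁, hC₁A, hsmall⟩ := hν.exists_forall_norm_le A hε
  refine ⟨pettisIntegral μ F C₁, fun x' => ?_⟩
  rw [hF.isPettisIntegralOn hC₁ x', abs_sub_comm,
    ← setIntegral_sdiff hC₁.1 (hD.2 x').integrableOn hC₁A]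
  refine abs_setIntegral_le_of_forall_subset (hA.diff hC₁.1) (hD.2 x').integrableOn
    fun B hB hBA => ?_
  rw [← hF.isPettisIntegralOn hB x', mul_comm]
  exact (abs_dual_apply_le x' _).trans
    (mul_le_mul_of_nonneg_left (hsmall B hB hBA) (norm_nonneg x'))

theorem isStronglyAdditive_of_not_c0 (hF : LocPettisIntegrable μ F)
    (hE : ¬∃ T : ZeroAtInftyContinuousMap ℕ ℝ →L[ℝ] E, ∃ c : ℝ, 0 < c ∧ ∀ y, c * ‖y‖ ≤ ‖T y‖)
    {C : ℝ} (hC : ∀ B ∈ finiteMeasureSets μ, ‖pettisIntegral μ F B‖ ≤ C) :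
    IsStronglyAdditive (finiteMeasureSets μ) (pettisIntegral μ F) := fun B hB hd => by
  by_contra hnot
  refine hE (exists_c0_embedding_of_not_tendsto (C := C) (fun s => ?_) hnot)
  rw [← hF.pettisIntegral_biUnion_finset hB hd s]
  exact hC _ (biUnion_mem_finiteMeasureSets s.finite_toSet fun j _ => hB j)

end LocPettisIntegrable

end Pettis

theorem stmt18_general (μ : Measure Ω) (hμ : LocallyDetermined μ)
    (F : Ω → X) :
    (PettisIntegrable μ F ↔
      (LocPettisIntegrable μ F ∧
        ∀ B : ℕ → Set Ω, (∀ n, B n ∈ finiteMeasureSets μ) →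
          Pairwise (Function.onFun Disjoint B) →
          Filter.Tendsto (fun n => pettisIntegral μ F (B n)) Filter.atTop (nhds 0))) ∧
    ((¬∃ T : ZeroAtInftyContinuousMap ℕ ℝ →L[ℝ] X,
        ∃ c : ℝ, 0 < c ∧ ∀ y, c * ‖y‖ ≤ ‖T y‖) →
      (∃ C : ℝ, ∀ B ∈ finiteMeasureSets μ, ‖pettisIntegral μ F B‖ ≤ C) →
      LocPettisIntegrable μ F → PettisIntegrable μ F) :=
  ⟨⟨fun hF => ⟨hF.locPettisIntegrable, hF.isStronglyAdditive⟩,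
      fun ⟨hL, hν⟩ => hL.pettisIntegrable hμ.1 hν⟩,
    fun hX ⟨_, hC⟩ hL => hL.pettisIntegrable hμ.1 (hL.isStronglyAdditive_of_not_c0 hX hC)⟩

/-- `F` is Pettis integrable iff it is locally Pettis integrable and
`ν_F` is strongly additive; if `X` has no subspace isomorphic to `c₀` and `ν_F` is
bounded, local Pettis integrability implies Pettis integrability. -/
theorem stmt18 (μ : Measure Ω) (hμ : LocallyDetermined μ)
    (F : Ω → X) (hw : WeaklyMeasurable μ F) :
    (PettisIntegrable μ F ↔
      (LocPettisIntegrable μ F ∧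
        ∀ B : ℕ → Set Ω, (∀ n, B n ∈ finiteMeasureSets μ) →
          Pairwise (Function.onFun Disjoint B) →
          Filter.Tendsto (fun n => pettisIntegral μ F (B n)) Filter.atTop (nhds 0))) ∧
    ((¬∃ T : ZeroAtInftyContinuousMap ℕ ℝ →L[ℝ] X,
        ∃ c : ℝ, 0 < c ∧ ∀ y, c * ‖y‖ ≤ ‖T y‖) →
      (∃ C : ℝ, ∀ B ∈ finiteMeasureSets μ, ‖pettisIntegral μ F B‖ ≤ C) →
      LocPettisIntegrable μ F → PettisIntegrable μ F) :=
  stmt18_general μ hμ F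

end
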